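/- arXiv:1305.2436 — 3 statements merged into one kernel-verified Lean document; each statement's English description precedes it below -/
import Mathlib

section
/- Let p ≥ 2, n ≥ 1 and k ≥ 1 be integers, let β* ∈ ℝ^p satisfy ‖β*‖₀ ≤ k, and let L_n : ℝ^p → ℝ be differentiable and satisfy the RSC conditions at β* with constants α₁, α₂ > 0 and τ₁, τ₂ ≥ 0. Let ρ_λ satisfy Assumption 1 with parameters λ > 0, L > 0, μ ≥ 0, and suppose (3/4)μ < α₁. Let C = {β ∈ ℝ^p : g(β) ≤ R and β ∈ Ω}, where R > 0, g : ℝ^p → ℝ is convex with g(β) ≥ ‖β‖₁ for every β, and Ω ⊆ ℝ^p is convex; assume β* ∈ C. Suppose (4/L)·max{‖∇L_n(β*)‖_∞, α₂·√((log p)/n)} ≤ λ ≤ α₂/(6RL) and n ≥ 16 R² max{τ₁², τ₂²} α₂⁻² log p. Then every stationary point β̃ ∈ C of the program min_{β ∈ C} [L_n(β) + ρ_λ(β)] satisfies ‖β̃ − β*‖₂ ≤ 6λL√k/(4α₁ − 3μ) and ‖β̃ − β*‖₁ ≤ 24λLk/(4α₁ − 3μ). -/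
open Finset

noncomputable def l1 {p : ℕ} (x : Fin p → ℝ) : ℝ := ∑ i, |x i|

noncomputable def l2 {p : ℕ} (x : Fin p → ℝ) : ℝ := Real.sqrt (∑ i, (x i) ^ 2)

noncomputable def linf {p : ℕ} (x : Fin p → ℝ) : ℝ := ⨆ i, |x i|

noncomputable def l0 {p : ℕ} (x : Fin p → ℝ) : ℕ :=
  (Finset.univ.filter (fun i => x i ≠ 0)).card

noncomputable def dot {p : ℕ} (x y : Fin p → ℝ) : ℝ := ∑ i, x i * y i

noncomputable def rhoVec {p : ℕ} (ρ : ℝ → ℝ) (x : Fin p → ℝ) : ℝ := ∑ i, ρ (x i)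

/-- Assumption 1 on the regularizer `ρ_λ` with parameters `λ, L, μ`. -/
structure Assumption1 (ρ : ℝ → ℝ) (lam L mu : ℝ) : Prop where
  zero : ρ 0 = 0
  even : ∀ t : ℝ, ρ (-t) = ρ t
  mono : ∀ s t : ℝ, 0 ≤ s → s ≤ t → ρ s ≤ ρ t
  slope : ∀ s t : ℝ, 0 < s → s ≤ t → ρ t / t ≤ ρ s / s
  diff : ∀ t : ℝ, t ≠ 0 → DifferentiableAt ℝ ρ t
  deriv_lim : Filter.Tendsto (deriv ρ) (nhdsWithin 0 (Set.Ioi 0)) (nhds (lam * L))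
  conv : ConvexOn ℝ Set.univ (fun t => ρ t + (mu / 2) * t ^ 2)

/-- The restricted strong convexity (RSC) conditions at `β*`. -/
def RSC {p : ℕ} (n : ℕ) (gradLn : (Fin p → ℝ) → (Fin p → ℝ)) (bstar : Fin p → ℝ)
    (a1 a2 t1 t2 : ℝ) : Prop :=
  (∀ Δ : Fin p → ℝ, l2 Δ ≤ 1 →
    dot (gradLn (bstar + Δ) - gradLn bstar) Δ ≥
      a1 * (l2 Δ) ^ 2 - t1 * (Real.log p / n) * (l1 Δ) ^ 2) ∧
  (∀ Δ : Fin p → ℝ, 1 ≤ l2 Δ →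
    dot (gradLn (bstar + Δ) - gradLn bstar) Δ ≥
      a2 * l2 Δ - t2 * Real.sqrt (Real.log p / n) * l1 Δ)

/-- `bt` is a stationary point of `min_{β ∈ C} L_n(β) + ρ_λ(β)`. -/
def IsStationaryPt {p : ℕ} (ρ : ℝ → ℝ) (lam L mu : ℝ)
    (gradLn : (Fin p → ℝ) → (Fin p → ℝ)) (C : Set (Fin p → ℝ)) (bt : Fin p → ℝ) : Prop :=
  ∃ z : Fin p → ℝ,
    (∀ β : Fin p → ℝ, rhoVec ρ β + (mu / 2) * (l2 β) ^ 2 ≥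
        rhoVec ρ bt + (mu / 2) * (l2 bt) ^ 2 + dot z (β - bt)) ∧
    linf (z - mu • bt) ≤ lam * L ∧
    (∀ β ∈ C, dot (gradLn bt + z - mu • bt) (β - bt) ≥ 0)

/-
Write ν = β̃ - β* and ℓ = λL. Convexity of ρ + (μ/2)t² together with ρ'(0+) = ℓ gives
ℓ|t| ≤ ρ(t) + (μ/2)t². Hence stationarity yields a dual vector w = μβ̃ - z with |wᵢ| ≤ ℓ and,
off the support S of β*, wᵢνᵢ ≤ μνᵢ² - ℓ|νᵢ|. Testing the variational inequality at β* and using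
‖∇Lₙ(β*)‖_∞ ≤ ℓ/4 bounds ⟨∇Lₙ(β̃) - ∇Lₙ(β*), ν⟩ by (ℓ/4)‖ν‖₁ + ⟨w, ν⟩ ≤ (5ℓ/4)‖ν‖₁. As
‖ν‖₁ ≤ 2R, the choice of λ and n rules out the second RSC regime, so ‖ν‖₂ ≤ 1, and the first one
gives the basic inequality α₁‖ν‖₂² ≤ (3ℓ/8)‖ν‖₁ + ⟨w, ν⟩. On S each term of the right side is at
most (11ℓ/8)|νᵢ|, with ∑_S |νᵢ| ≤ √k‖ν‖₂ by Cauchy–Schwarz; off S it is at most (3/4)μνᵢ², and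
also at most α₁νᵢ² - (ℓ/8)|νᵢ|. The first bound gives the ℓ² estimate, the second the ℓ¹ one.
-/

open Set

lemma Assumption1.hasDerivWithinAt_Ici {ρ : ℝ → ℝ} {lam L mu : ℝ} (h : Assumption1 ρ lam L mu) :
    HasDerivWithinAt ρ (lam * L) (Ici 0) 0 := by
  have hcont : Continuous fun t => ρ t + mu / 2 * t ^ 2 :=
    continuousOn_univ.mp (h.conv.continuousOn isOpen_univ)
  have hρ : Continuous ρ := by
    convert hcont.sub (by fun_prop : Continuous fun t : ℝ => mu / 2 * t ^ 2) using 1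
    ext t; simp
  exact hasDerivWithinAt_Ici_of_tendsto_deriv
    (fun t ht => (h.diff t (ne_of_gt ht)).differentiableWithinAt)
    hρ.continuousWithinAt self_mem_nhdsWithin h.deriv_lim

lemma Assumption1.mul_abs_le_add_sq {ρ : ℝ → ℝ} {lam L mu : ℝ} (h : Assumption1 ρ lam L mu)
    (t : ℝ) :
    lam * L * |t| ≤ ρ t + mu / 2 * t ^ 2 := by
  have hpos : ∀ t > 0, lam * L * t ≤ ρ t + mu / 2 * t ^ 2 := by
    intro t ht
    have hderiv : HasDerivWithinAt (fun t => ρ t + mu / 2 * t ^ 2) (lam * L) (Ioi 0) 0 := by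
      refine (h.hasDerivWithinAt_Ici.Ioi_of_Ici.fun_add
        ((hasDerivAt_pow 2 (0 : ℝ)).const_mul (mu / 2)).hasDerivWithinAt).congr_deriv ?_
      simp
    have := h.conv.le_slope_of_hasDerivWithinAt_Ioi (mem_univ 0) (mem_univ t) ht hderiv
    rw [slope_def_field, le_div_iff₀ (by simpa using ht)] at this
    simpa [h.zero] using this
  rcases lt_trichotomy t 0 with ht | rfl | ht
  · simpa [abs_of_neg ht, h.even] using hpos (-t) (neg_pos.mpr ht)
  · simp [h.zero]
  · simpa [abs_of_pos ht] using hpos t ht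

section Norms

variable {p : ℕ}

lemma l2_sq (x : Fin p → ℝ) : l2 x ^ 2 = ∑ i, x i ^ 2 :=
  Real.sq_sqrt (sum_nonneg fun _ _ => sq_nonneg _)

lemma l2_nonneg (x : Fin p → ℝ) : 0 ≤ l2 x := Real.sqrt_nonneg _

lemma l1_nonneg (x : Fin p → ℝ) : 0 ≤ l1 x := sum_nonneg fun _ _ => abs_nonneg _

lemma l1_sub_le (x y : Fin p → ℝ) : l1 (x - y) ≤ l1 x + l1 y := by
  rw [l1, l1, l1, ← sum_add_distrib]
  exact sum_le_sum fun _ _ => abs_sub _ _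

lemma abs_le_linf (x : Fin p → ℝ) (i : Fin p) : |x i| ≤ linf x :=
  le_ciSup (f := fun i => |x i|) (Set.finite_range _).bddAbove i

lemma mul_le_mul_abs_of_abs_le {a c : ℝ} (h : |a| ≤ c) (b : ℝ) : a * b ≤ c * |b| :=
  (le_abs_self _).trans ((abs_mul a b).trans_le (mul_le_mul_of_nonneg_right h (abs_nonneg b)))

lemma abs_dot_le {x : Fin p → ℝ} {c : ℝ} (hx : ∀ i, |x i| ≤ c) (y : Fin p → ℝ) :
    |dot x y| ≤ c * l1 y := by
  rw [dot, l1, mul_sum]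
  refine (abs_sum_le_sum_abs _ _).trans (sum_le_sum fun i _ => ?_)
  rw [abs_mul]
  exact mul_le_mul_of_nonneg_right (hx i) (abs_nonneg _)

lemma dot_sub_left (x y z : Fin p → ℝ) : dot (x - y) z = dot x z - dot y z := by
  simp only [dot, Pi.sub_apply, sub_mul, sum_sub_distrib]

end Norms

lemma sum_abs_le_sqrt_mul_sqrt {ι : Type*} {s : Finset ι} {k : ℕ} (hs : #s ≤ k) (f : ι → ℝ) :
    ∑ i ∈ s, |f i| ≤ √k * √(∑ i ∈ s, f i ^ 2) := by
  rw [← Real.sqrt_mul (Nat.cast_nonneg k)]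
  refine Real.le_sqrt_of_sq_le ?_
  calc (∑ i ∈ s, |f i|) ^ 2 ≤ #s * ∑ i ∈ s, |f i| ^ 2 := sq_sum_le_card_mul_sum_sq
    _ ≤ k * ∑ i ∈ s, f i ^ 2 := by
      simp only [sq_abs]
      gcongr

lemma subgradient_sum_coord_le {ι : Type*} [Fintype ι] [DecidableEq ι] {φ : ℝ → ℝ}
    {x z : ι → ℝ} (h : ∀ y : ι → ℝ, ∑ i, φ (x i) + ∑ i, z i * (y i - x i) ≤ ∑ i, φ (y i))
    (j : ι) (u : ℝ) : φ (x j) + z j * (u - x j) ≤ φ u := by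
  have key := h (Function.update x j u)
  rw [← sub_nonneg, ← sum_add_distrib, ← sum_sub_distrib,
    sum_eq_single j (fun i _ hi => by simp [hi]) (by simp)] at key
  simpa using key

lemma IsStationaryPt.exists_dual {p : ℕ} {ρ : ℝ → ℝ} {lam L mu : ℝ}
    {gradLn : (Fin p → ℝ) → (Fin p → ℝ)} {C : Set (Fin p → ℝ)} {bt : Fin p → ℝ}
    (h : IsStationaryPt ρ lam L mu gradLn C bt) (hA : Assumption1 ρ lam L mu) :
    ∃ w : Fin p → ℝ, (∀ i, |w i| ≤ lam * L) ∧
      (∀ i, w i * bt i ≤ mu * bt i ^ 2 - lam * L * |bt i|) ∧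
      ∀ β ∈ C, dot (gradLn bt) (bt - β) ≤ dot w (bt - β) := by
  obtain ⟨z, hsub, hinf, hfo⟩ := h
  refine ⟨mu • bt - z, fun i => ?_, fun i => ?_, fun β hβ => ?_⟩
  · simpa [abs_sub_comm] using (abs_le_linf (z - mu • bt) i).trans hinf
  · have hcoord := subgradient_sum_coord_le (φ := fun t => ρ t + mu / 2 * t ^ 2) (x := bt) (z := z)
      (fun y => by simpa [rhoVec, dot, l2_sq, sum_add_distrib, mul_sum] using hsub y) i 0
    have := hA.mul_abs_le_add_sq (bt i)
    simp only [hA.zero] at hcoord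
    simp only [Pi.sub_apply, Pi.smul_apply, smul_eq_mul]
    linarith
  · have hdiff : dot (mu • bt - z) (bt - β) - dot (gradLn bt) (bt - β)
        = dot (gradLn bt + z - mu • bt) (β - bt) := by
      simp only [dot, ← sum_sub_distrib]
      refine sum_congr rfl fun i _ => ?_
      simp only [Pi.sub_apply, Pi.add_apply, Pi.smul_apply, smul_eq_mul]
      ring
    linarith [hfo β hβ]

lemma dot_sub_grad_le_of_first_order {p : ℕ} {gradLn : (Fin p → ℝ) → (Fin p → ℝ)}
    {bstar bt w : Fin p → ℝ} {c : ℝ}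
    (hfo : dot (gradLn bt) (bt - bstar) ≤ dot w (bt - bstar)) (hgrad : linf (gradLn bstar) ≤ c) :
    dot (gradLn (bstar + (bt - bstar)) - gradLn bstar) (bt - bstar) ≤
      c * l1 (bt - bstar) + dot w (bt - bstar) := by
  rw [add_sub_cancel, dot_sub_left]
  have := abs_dot_le (fun i => (abs_le_linf (gradLn bstar) i).trans hgrad) (bt - bstar)
  linarith [(abs_le.mp this).1]

lemma RSC.l2_le_one {p n : ℕ} {gradLn : (Fin p → ℝ) → (Fin p → ℝ)} {bstar : Fin p → ℝ}
    {a1 a2 t1 t2 : ℝ} (hRSC : RSC n gradLn bstar a1 a2 t1 t2) (ha2 : 0 < a2) {Δ : Fin p → ℝ}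
    (h : dot (gradLn (bstar + Δ) - gradLn bstar) Δ + t2 * √(Real.log p / n) * l1 Δ < a2) :
    l2 Δ ≤ 1 := by
  by_contra! hΔ
  have := hRSC.2 Δ hΔ.le
  nlinarith

lemma mul_sqrt_div_mul_le {τ M x y R a : ℝ} (hτ : τ ^ 2 ≤ M) (hx : 0 ≤ x) (hy : 0 ≤ y)
    (ha : 0 < a) (h : 16 * R ^ 2 * M / a ^ 2 * x ≤ y) : τ * √(x / y) * (4 * R) ≤ a := by
  refine (le_abs_self _).trans (abs_le_of_sq_le_sq ?_ ha.le)
  rw [div_mul_eq_mul_div, div_le_iff₀' (by positivity)] at h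
  calc (τ * √(x / y) * (4 * R)) ^ 2 = τ ^ 2 * (x / y) * (16 * R ^ 2) := by
        rw [mul_pow, mul_pow, Real.sq_sqrt (div_nonneg hx hy)]; ring
    _ ≤ M * (x / y) * (16 * R ^ 2) := by gcongr
    _ = 16 * R ^ 2 * M * x / y := by ring
    _ ≤ a ^ 2 := div_le_of_le_mul₀ hy (sq_nonneg a) h

lemma RSC.basic_inequality {p n : ℕ} {gradLn : (Fin p → ℝ) → (Fin p → ℝ)} {bstar : Fin p → ℝ}
    {a1 a2 t1 t2 ℓ R : ℝ} (hRSC : RSC n gradLn bstar a1 a2 t1 t2) (ha2 : 0 < a2)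
    (ht1 : 0 ≤ t1) (ht2 : 0 ≤ t2) (hℓ : 0 ≤ ℓ) (hRℓ : 6 * R * ℓ ≤ a2)
    (ht1σ : t1 * √(Real.log p / n) * (4 * R) ≤ a2) (ht2σ : t2 * √(Real.log p / n) * (4 * R) ≤ a2)
    (hσ : a2 * √(Real.log p / n) ≤ ℓ / 4) {Δ w : Fin p → ℝ} (hΔ : l1 Δ ≤ 2 * R)
    (hcurv : dot (gradLn (bstar + Δ) - gradLn bstar) Δ ≤ ℓ / 4 * l1 Δ + dot w Δ)
    (hw : dot w Δ ≤ ℓ * l1 Δ) :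
    a1 * l2 Δ ^ 2 ≤ 3 * ℓ / 8 * l1 Δ + dot w Δ := by
  have hκ : 0 ≤ Real.log p / n := div_nonneg (Real.log_natCast_nonneg p) n.cast_nonneg
  set σ := √(Real.log p / n)
  have hσ0 : 0 ≤ σ := Real.sqrt_nonneg _
  have hΔ0 := l1_nonneg Δ
  have hd : l2 Δ ≤ 1 := hRSC.l2_le_one ha2 (by
    nlinarith [mul_le_mul_of_nonneg_left hΔ hℓ, mul_le_mul_of_nonneg_left hΔ (mul_nonneg ht2 hσ0)])
  have htol : t1 * (Real.log p / n) * l1 Δ ^ 2 ≤ ℓ / 8 * l1 Δ := calc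
    _ = t1 * σ * σ * l1 Δ * l1 Δ := by rw [mul_assoc t1 σ, Real.mul_self_sqrt hκ]; ring
    _ ≤ t1 * σ * σ * (2 * R) * l1 Δ := by gcongr
    _ = t1 * σ * (4 * R) * (σ * l1 Δ) / 2 := by ring
    _ ≤ a2 * (σ * l1 Δ) / 2 := by gcongr
    _ = a2 * σ * l1 Δ / 2 := by ring
    _ ≤ ℓ / 4 * l1 Δ / 2 := by gcongr
    _ = ℓ / 8 * l1 Δ := by ring
  linarith [hRSC.1 Δ hd]

section SupportSplit

variable {p k : ℕ} {S : Finset (Fin p)} {ℓ a1 mu : ℝ} {ν w : Fin p → ℝ}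

lemma basic_inequality_rhs_le (hw : ∀ i, |w i| ≤ ℓ) :
    3 * ℓ / 8 * l1 ν + dot w ν ≤
      11 * ℓ / 8 * ∑ i ∈ S, |ν i| + ∑ i ∈ Sᶜ, (3 * ℓ / 8 * |ν i| + w i * ν i) := by
  rw [l1, dot, mul_sum, ← sum_add_distrib, ← sum_add_sum_compl S, mul_sum]
  gcongr with i
  linarith [mul_le_mul_abs_of_abs_le (hw i) (ν i)]

lemma l2_le_of_basic_inequality (hS : #S ≤ k) (hℓ : 0 ≤ ℓ) (hmu : 0 ≤ mu)
    (hmua : 3 / 4 * mu < a1) (hw : ∀ i, |w i| ≤ ℓ)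
    (hw_off : ∀ i ∉ S, w i * ν i ≤ mu * ν i ^ 2 - ℓ * |ν i|)
    (hbasic : a1 * l2 ν ^ 2 ≤ 3 * ℓ / 8 * l1 ν + dot w ν) :
    l2 ν ≤ 6 * ℓ * √k / (4 * a1 - 3 * mu) := by
  have hoff : ∑ i ∈ Sᶜ, (3 * ℓ / 8 * |ν i| + w i * ν i) ≤ 3 / 4 * mu * l2 ν ^ 2 := calc
    _ ≤ ∑ i ∈ Sᶜ, 3 / 4 * mu * ν i ^ 2 := sum_le_sum fun i hi => by
        have := mul_le_mul_abs_of_abs_le (hw i) (ν i)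
        have := hw_off i (mem_compl.mp hi)
        nlinarith [mul_nonneg hmu (sq_nonneg (ν i))]
    _ ≤ 3 / 4 * mu * ∑ i, ν i ^ 2 := by
        rw [← mul_sum]
        exact mul_le_mul_of_nonneg_left (sum_le_univ_sum_of_nonneg fun i => sq_nonneg (ν i))
          (by linarith)
    _ = _ := by rw [l2_sq]
  have hsupp : ∑ i ∈ S, |ν i| ≤ √k * l2 ν := by
    refine (sum_abs_le_sqrt_mul_sqrt hS ν).trans (mul_le_mul_of_nonneg_left ?_ (Real.sqrt_nonneg _))
    exact Real.sqrt_le_sqrt (sum_le_univ_sum_of_nonneg fun i => sq_nonneg (ν i))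
  have hd := l2_nonneg ν
  have hquad : (4 * a1 - 3 * mu) * l2 ν * l2 ν ≤ 11 / 2 * ℓ * √k * l2 ν := by
    nlinarith [basic_inequality_rhs_le (S := S) (ν := ν) hw]
  rw [le_div_iff₀ (by linarith)]
  rcases hd.eq_or_lt with h0 | h0
  · rw [← h0, zero_mul]
    exact mul_nonneg (by linarith) (Real.sqrt_nonneg _)
  · nlinarith [le_of_mul_le_mul_right hquad h0, Real.sqrt_nonneg k]

lemma l1_le_of_basic_inequality (hS : #S ≤ k) (hℓ : 0 < ℓ) (hmu : 0 ≤ mu)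
    (hmua : 3 / 4 * mu < a1) (hw : ∀ i, |w i| ≤ ℓ)
    (hw_off : ∀ i ∉ S, w i * ν i ≤ mu * ν i ^ 2 - ℓ * |ν i|)
    (hbasic : a1 * l2 ν ^ 2 ≤ 3 * ℓ / 8 * l1 ν + dot w ν) :
    l1 ν ≤ 24 * ℓ * k / (4 * a1 - 3 * mu) := by
  set a := ∑ i ∈ S, |ν i|
  set e := ∑ i ∈ Sᶜ, |ν i|
  set s := √(∑ i ∈ S, ν i ^ 2)
  have hoff : ∑ i ∈ Sᶜ, (3 * ℓ / 8 * |ν i| + w i * ν i) ≤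
      a1 * ∑ i ∈ Sᶜ, ν i ^ 2 - ℓ / 8 * e := by
    rw [mul_sum, mul_sum, ← sum_sub_distrib]
    refine sum_le_sum fun i hi => ?_
    have h1 := mul_le_mul_abs_of_abs_le (hw i) (ν i)
    have h2 := hw_off i (mem_compl.mp hi)
    have hx := abs_nonneg (ν i)
    rw [← sq_abs (ν i)] at h2 ⊢
    rcases le_total (a1 * |ν i|) (3 / 2 * ℓ) with hc | hc
    · nlinarith [mul_le_mul_of_nonneg_right hc hx,
        mul_le_mul_of_nonneg_right hmua.le (sq_nonneg |ν i|)]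
    · nlinarith [mul_le_mul_of_nonneg_right hc hx]
  have hl2 : l2 ν ^ 2 = s ^ 2 + ∑ i ∈ Sᶜ, ν i ^ 2 := by
    rw [l2_sq, Real.sq_sqrt (sum_nonneg fun _ _ => sq_nonneg _), sum_add_sum_compl]
  have hl1 : l1 ν = a + e := (sum_add_sum_compl S _).symm
  have hcone : a1 * s ^ 2 + ℓ / 8 * e ≤ 11 * ℓ / 8 * a := by
    nlinarith [basic_inequality_rhs_le (S := S) (ν := ν) hw]
  have hsupp : a ≤ √k * s := sum_abs_le_sqrt_mul_sqrt hS ν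
  have ha1 : 0 < a1 := by linarith
  -- (ℓ/8)(a + e) ≤ (3/2)ℓ√k·s - α₁s², and the right side is at most 9ℓ²k/(16α₁)
  have hae : a1 * (a + e) ≤ 9 / 2 * ℓ * k := by
    refine le_of_mul_le_mul_left ?_ hℓ
    have hk : ℓ ^ 2 * (√k * √k) = ℓ ^ 2 * k := by rw [Real.mul_self_sqrt (Nat.cast_nonneg k)]
    nlinarith [sq_nonneg (3 * ℓ * √k - 4 * a1 * s),
      mul_le_mul_of_nonneg_left hsupp (by positivity : (0 : ℝ) ≤ 12 * a1 * ℓ),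
      mul_le_mul_of_nonneg_left hcone (by positivity : (0 : ℝ) ≤ 8 * a1)]
  rw [le_div_iff₀ (by linarith)]
  nlinarith [mul_nonneg (l1_nonneg ν) hmu, Nat.cast_nonneg (α := ℝ) k]

end SupportSplit

theorem statistical_error_bounds_for_stationary_points_general
    {p n k : ℕ}
    (bstar : Fin p → ℝ) (hsparse : l0 bstar ≤ k)
    (gradLn : (Fin p → ℝ) → (Fin p → ℝ))
    (a1 a2 t1 t2 : ℝ) (ha2 : 0 < a2) (ht1 : 0 ≤ t1) (ht2 : 0 ≤ t2)
    (hRSC : RSC n gradLn bstar a1 a2 t1 t2)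
    (ρ : ℝ → ℝ) (lam L mu : ℝ) (hlam : 0 < lam) (hL : 0 < L) (hmu : 0 ≤ mu)
    (hA1 : Assumption1 ρ lam L mu) (hmua : (3 / 4) * mu < a1)
    (R : ℝ) (hR : 0 < R)
    (g : (Fin p → ℝ) → ℝ) (hg : ∀ β, l1 β ≤ g β)
    (Ω : Set (Fin p → ℝ))
    (C : Set (Fin p → ℝ)) (hC : C = {β | g β ≤ R ∧ β ∈ Ω})
    (hbstarC : bstar ∈ C)
    (hlam_lb : (4 / L) * max (linf (gradLn bstar)) (a2 * Real.sqrt (Real.log p / n)) ≤ lam)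
    (hlam_ub : lam ≤ a2 / (6 * R * L))
    (hn_lb : 16 * R ^ 2 * max (t1 ^ 2) (t2 ^ 2) / a2 ^ 2 * Real.log p ≤ n)
    (bt : Fin p → ℝ) (hbtC : bt ∈ C)
    (hstat : IsStationaryPt ρ lam L mu gradLn C bt) :
    l2 (bt - bstar) ≤ 6 * lam * L * Real.sqrt k / (4 * a1 - 3 * mu) ∧
    l1 (bt - bstar) ≤ 24 * lam * L * k / (4 * a1 - 3 * mu) := by
  obtain ⟨w, hw, hw_bt, hw_fo⟩ := hstat.exists_dual hA1
  set ℓ := lam * L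
  set ν := bt - bstar
  have hmax : max (linf (gradLn bstar)) (a2 * √(Real.log p / n)) ≤ ℓ / 4 := by
    rw [div_mul_eq_mul_div, div_le_iff₀ hL] at hlam_lb
    linarith
  have hRℓ : 6 * R * ℓ ≤ a2 := by
    rw [le_div_iff₀ (by positivity)] at hlam_ub
    linarith
  have hν : l1 ν ≤ 2 * R := by
    have hball : ∀ β ∈ C, l1 β ≤ R := fun β hβ => (hg β).trans (hC ▸ hβ).1
    linarith [l1_sub_le bt bstar, hball bt hbtC, hball bstar hbstarC]
  have hcurv := dot_sub_grad_le_of_first_order (hw_fo bstar hbstarC)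
    ((le_max_left _ _).trans hmax)
  have hbasic := hRSC.basic_inequality ha2 ht1 ht2 (by positivity) hRℓ
    (mul_sqrt_div_mul_le (le_max_left _ _) (Real.log_natCast_nonneg p) n.cast_nonneg ha2 hn_lb)
    (mul_sqrt_div_mul_le (le_max_right _ _) (Real.log_natCast_nonneg p) n.cast_nonneg ha2 hn_lb)
    ((le_max_right _ _).trans hmax) hν hcurv (abs_le.mp (abs_dot_le hw ν)).2
  have hw_off : ∀ i ∉ univ.filter (fun i => bstar i ≠ 0),
      w i * ν i ≤ mu * ν i ^ 2 - ℓ * |ν i| := by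
    intro i hi
    have : bstar i = 0 := by simpa using hi
    simpa [ν, this] using hw_bt i
  constructor
  · simpa [ℓ, mul_assoc] using
      l2_le_of_basic_inequality hsparse (by positivity) hmu hmua hw hw_off hbasic
  · simpa [ℓ, mul_assoc] using
      l1_le_of_basic_inequality hsparse (by positivity) hmu hmua hw hw_off hbasic

theorem statistical_error_bounds_for_stationary_points
    {p n k : ℕ} (hp : 2 ≤ p) (hn : 1 ≤ n) (hk : 1 ≤ k)
    (bstar : Fin p → ℝ) (hsparse : l0 bstar ≤ k)
    (Ln : (Fin p → ℝ) → ℝ) (gradLn : (Fin p → ℝ) → (Fin p → ℝ))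
    (hdiff : ∀ β : Fin p → ℝ, HasFDerivAt Ln
      (∑ i, gradLn β i • (ContinuousLinearMap.proj i : (Fin p → ℝ) →L[ℝ] ℝ)) β)
    (a1 a2 t1 t2 : ℝ) (ha1 : 0 < a1) (ha2 : 0 < a2) (ht1 : 0 ≤ t1) (ht2 : 0 ≤ t2)
    (hRSC : RSC n gradLn bstar a1 a2 t1 t2)
    (ρ : ℝ → ℝ) (lam L mu : ℝ) (hlam : 0 < lam) (hL : 0 < L) (hmu : 0 ≤ mu)
    (hA1 : Assumption1 ρ lam L mu) (hmua : (3 / 4) * mu < a1)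
    (R : ℝ) (hR : 0 < R)
    (g : (Fin p → ℝ) → ℝ) (hgconv : ConvexOn ℝ Set.univ g) (hg : ∀ β, l1 β ≤ g β)
    (Ω : Set (Fin p → ℝ)) (hΩ : Convex ℝ Ω)
    (C : Set (Fin p → ℝ)) (hC : C = {β | g β ≤ R ∧ β ∈ Ω})
    (hbstarC : bstar ∈ C)
    (hlam_lb : (4 / L) * max (linf (gradLn bstar)) (a2 * Real.sqrt (Real.log p / n)) ≤ lam)
    (hlam_ub : lam ≤ a2 / (6 * R * L))
    (hn_lb : 16 * R ^ 2 * max (t1 ^ 2) (t2 ^ 2) / a2 ^ 2 * Real.log p ≤ n)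
    (bt : Fin p → ℝ) (hbtC : bt ∈ C)
    (hstat : IsStationaryPt ρ lam L mu gradLn C bt) :
    l2 (bt - bstar) ≤ 6 * lam * L * Real.sqrt k / (4 * a1 - 3 * mu) ∧
    l1 (bt - bstar) ≤ 24 * lam * L * k / (4 * a1 - 3 * mu) :=
  statistical_error_bounds_for_stationary_points_general bstar hsparse gradLn a1 a2 t1 t2 ha2 ht1
    ht2 hRSC ρ lam L mu hlam hL hmu hA1 hmua R hR g hg Ω C hC hbstarC hlam_lb hlam_ub hn_lb bt hbtC
    hstat
end

section
/- Let ρ_λ : ℝ → ℝ satisfy Assumption 1 with parameters λ > 0, L > 0, μ ≥ 0. Let v ∈ ℝ^p, let A ⊆ {1, …, p} with |A| = k be an index set of the k largest entries of v in magnitude (i.e., |v_i| ≥ |v_j| for all i ∈ A and j ∉ A), and write ρ_λ(u) := ∑_j ρ_λ(u_j) for vectors u, v_A for the restriction of v to A, and v_{A^c} for its restriction to the complement of A. If ξ > 0 satisfies ξ·ρ_λ(v_A) − ρ_λ(v_{A^c}) ≥ 0, then ξ·ρ_λ(v_A) − ρ_λ(v_{A^c}) ≤ λL·(ξ‖v_A‖₁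 − ‖v_{A^c}‖₁). -/
open Finset

/-- The restriction of a vector to an index set (zero off the set). -/
def restrict {p : ℕ} (v : Fin p → ℝ) (A : Finset (Fin p)) : Fin p → ℝ :=
  fun i => if i ∈ A then v i else 0

section Aux

variable {ρ : ℝ → ℝ} {lam L mu : ℝ}

lemma Assumption1.nonneg (hA1 : Assumption1 ρ lam L mu) {t : ℝ} (ht : 0 ≤ t) : 0 ≤ ρ t := by
  have := hA1.mono 0 t le_rfl ht
  rwa [hA1.zero] at this

lemma Assumption1.continuous (hA1 : Assumption1 ρ lam L mu) : Continuous ρ := by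
  have hc : ContinuousOn (fun t => ρ t + (mu / 2) * t ^ 2) Set.univ :=
    hA1.conv.continuousOn isOpen_univ
  have hc2 : Continuous (fun t : ℝ => ρ t + (mu / 2) * t ^ 2) :=
    continuousOn_univ.mp hc
  have : Continuous (fun t : ℝ => (ρ t + (mu / 2) * t ^ 2) - (mu / 2) * t ^ 2) :=
    hc2.sub (by continuity)
  simpa using this

lemma Assumption1.slope_tendsto (hA1 : Assumption1 ρ lam L mu) :
    Filter.Tendsto (fun s => ρ s / s) (nhdsWithin 0 (Set.Ioi 0)) (nhds (lam * L)) := by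
  have hd := hA1.deriv_lim
  rw [Metric.tendsto_nhdsWithin_nhds] at hd ⊢
  intro ε hε
  obtain ⟨δ, hδ, hδ'⟩ := hd ε hε
  refine ⟨δ, hδ, ?_⟩
  intro s hs hsd
  have hs0 : (0:ℝ) < s := hs
  obtain ⟨c, hc, hceq⟩ := exists_deriv_eq_slope ρ hs0
    (hA1.continuous.continuousOn)
    (fun x hx => (hA1.diff x (ne_of_gt hx.1)).differentiableWithinAt)
  have hρs : ρ s / s = deriv ρ c := by
    rw [hceq, hA1.zero]; ring_nf
  rw [hρs]
  refine hδ' hc.1 ?_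
  rw [Real.dist_eq] at hsd ⊢
  have : |c - 0| < |s - 0| := by
    rw [sub_zero, sub_zero, abs_of_pos hc.1, abs_of_pos hs0]; exact hc.2
  linarith

lemma Assumption1.le_linear (hA1 : Assumption1 ρ lam L mu) {t : ℝ} (ht : 0 ≤ t) :
    ρ t ≤ lam * L * t := by
  rcases eq_or_lt_of_le ht with h | h
  · rw [← h, hA1.zero, mul_zero]
  · have hle : ρ t / t ≤ lam * L := by
      refine ge_of_tendsto hA1.slope_tendsto ?_
      filter_upwards [Ioc_mem_nhdsGT_of_mem (Set.left_mem_Ico.mpr h)] with s hs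
      exact hA1.slope s t hs.1 hs.2
    calc ρ t = (ρ t / t) * t := by field_simp
    _ ≤ lam * L * t := by
        exact mul_le_mul_of_nonneg_right hle (le_of_lt h)

lemma Assumption1.pos (hA1 : Assumption1 ρ lam L mu) (hlam : 0 < lam) (hL : 0 < L)
    {t : ℝ} (ht : 0 < t) : 0 < ρ t := by
  by_contra h
  push_neg at h
  have ht0 : ρ t = 0 := le_antisymm h (hA1.nonneg ht.le)
  have hzero : Filter.Tendsto (fun s => ρ s / s) (nhdsWithin 0 (Set.Ioi 0)) (nhds 0) := by
    refine Filter.Tendsto.congr' ?_ tendsto_const_nhds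
    filter_upwards [Ioc_mem_nhdsGT_of_mem (Set.left_mem_Ico.mpr ht)] with s hs
    have h1 : ρ s ≤ 0 := by rw [← ht0]; exact hA1.mono s t hs.1.le hs.2
    have h2 : 0 ≤ ρ s := hA1.nonneg hs.1.le
    rw [le_antisymm h1 h2, zero_div]
  have := tendsto_nhds_unique hA1.slope_tendsto hzero
  nlinarith

/-- key pairwise inequality: for `0 ≤ s ≤ t`,
`(lam*L*s - ρ s) * ρ t ≤ (lam*L*t - ρ t) * ρ s`. -/
lemma Assumption1.pair (hA1 : Assumption1 ρ lam L mu) (hlam : 0 < lam) (hL : 0 < L)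
    {s t : ℝ} (hs : 0 ≤ s) (hst : s ≤ t) :
    (lam * L * s - ρ s) * ρ t ≤ (lam * L * t - ρ t) * ρ s := by
  rcases eq_or_lt_of_le hs with h | h
  · rw [← h, hA1.zero]; ring_nf; simp
  · have ht : 0 < t := lt_of_lt_of_le h hst
    have hsl := hA1.slope s t h hst
    have : s * ρ t ≤ t * ρ s := by
      rw [div_le_div_iff₀ ht h] at hsl
      linarith
    nlinarith [mul_pos hlam hL]

end Aux

theorem regularizer_cone_inequality
    {p k : ℕ}
    (ρ : ℝ → ℝ) (lam L mu : ℝ) (hlam : 0 < lam) (hL : 0 < L) (hmu : 0 ≤ mu)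
    (hA1 : Assumption1 ρ lam L mu)
    (v : Fin p → ℝ) (A : Finset (Fin p)) (hcard : A.card = k)
    (htop : ∀ i ∈ A, ∀ j ∉ A, |v j| ≤ |v i|)
    (ξ : ℝ) (hξ : 0 < ξ)
    (hnonneg : 0 ≤ ξ * rhoVec ρ (restrict v A) - rhoVec ρ (restrict v Aᶜ)) :
    ξ * rhoVec ρ (restrict v A) - rhoVec ρ (restrict v Aᶜ) ≤
      lam * L * (ξ * l1 (restrict v A) - l1 (restrict v Aᶜ)) := by
  have habs : ∀ x : ℝ, ρ |x| = ρ x := by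
    intro x
    rcases abs_cases x with ⟨h, _⟩ | ⟨h, _⟩
    · rw [h]
    · rw [h, hA1.even]
  have hrho : ∀ B : Finset (Fin p), rhoVec ρ (restrict v B) = ∑ i ∈ B, ρ |v i| := by
    intro B
    unfold rhoVec _root_.restrict
    rw [← Finset.sum_subset (Finset.subset_univ B)
      (fun x _ hx => by simp [hx, hA1.zero])]
    exact Finset.sum_congr rfl (fun i hi => by simp [hi, habs])
  have hl1 : ∀ B : Finset (Fin p), l1 (restrict v B) = ∑ i ∈ B, |v i| := by
    intro B
    unfold l1 _root_.restrict
    rw [← Finset.sum_subset (Finset.subset_univ B) (fun x _ hx => by simp [hx])]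
    exact Finset.sum_congr rfl (fun i hi => by simp [hi])
  rw [hrho, hrho, hl1, hl1] at *
  set P := ∑ i ∈ A, ρ |v i| with hP
  set Q := ∑ i ∈ Aᶜ, ρ |v i| with hQ
  set G := ∑ i ∈ A, (lam * L * |v i| - ρ |v i|) with hG
  set H := ∑ i ∈ Aᶜ, (lam * L * |v i| - ρ |v i|) with hH
  have hGP : lam * L * (∑ i ∈ A, |v i|) = G + P := by
    rw [hG, hP, Finset.mul_sum, ← Finset.sum_add_distrib]
    exact Finset.sum_congr rfl (fun i _ => by ring)
  have hHQ : lam * L * (∑ i ∈ Aᶜ, |v i|) = H + Q := by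
    rw [hH, hQ, Finset.mul_sum, ← Finset.sum_add_distrib]
    exact Finset.sum_congr rfl (fun i _ => by ring)
  have key : H ≤ ξ * G := by
    have hGnn : 0 ≤ G :=
      Finset.sum_nonneg fun i _ => sub_nonneg.mpr (hA1.le_linear (abs_nonneg _))
    have hHnn : 0 ≤ H :=
      Finset.sum_nonneg fun i _ => sub_nonneg.mpr (hA1.le_linear (abs_nonneg _))
    have hPnn : 0 ≤ P := Finset.sum_nonneg fun i _ => hA1.nonneg (abs_nonneg _)
    have hQP : Q ≤ ξ * P := by linarith
    have hmain : H * P ≤ G * Q := by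
      rw [hH, hP, hG, hQ, Finset.sum_mul_sum, Finset.sum_mul_sum]
      rw [Finset.sum_comm]
      refine Finset.sum_le_sum fun i hi => Finset.sum_le_sum fun j hj => ?_
      exact hA1.pair hlam hL (abs_nonneg (v j)) (htop i hi j (Finset.mem_compl.mp hj))
    rcases eq_or_lt_of_le hPnn with hP0 | hP0
    · -- P = 0 : all entries vanish
      have hzeroA : ∀ i ∈ A, v i = 0 := by
        intro i hi
        by_contra hvi
        have : 0 < ρ |v i| := hA1.pos hlam hL (abs_pos.mpr hvi)
        have hle : ρ |v i| ≤ P :=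
          Finset.single_le_sum (fun j _ => hA1.nonneg (abs_nonneg _)) hi
        linarith
      have hG0 : G = 0 := by
        rw [hG]
        refine Finset.sum_eq_zero fun i hi => ?_
        rw [hzeroA i hi]; simp [hA1.zero]
      have hH0 : H = 0 := by
        rw [hH]
        refine Finset.sum_eq_zero fun j hj => ?_
        have hvj : v j = 0 := by
          rcases A.eq_empty_or_nonempty with hAe | ⟨i0, hi0⟩
          · -- A empty : Q ≤ ξ * P = 0, so every ρ |v j| = 0, so v j = 0
            have hQ0 : Q = 0 := by
              have : 0 ≤ Q := Finset.sum_nonneg fun i _ => hA1.nonneg (abs_nonneg _)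
              nlinarith
            by_contra hvj
            have hpos : 0 < ρ |v j| := hA1.pos hlam hL (abs_pos.mpr hvj)
            have hle : ρ |v j| ≤ Q :=
              Finset.single_le_sum (fun i _ => hA1.nonneg (abs_nonneg _)) hj
            linarith
          · have := htop i0 hi0 j (Finset.mem_compl.mp hj)
            rw [hzeroA i0 hi0] at this
            have h0 : |v j| ≤ 0 := by simpa using this
            exact abs_eq_zero.mp (le_antisymm h0 (abs_nonneg _))
        rw [hvj]; simp [hA1.zero]
      rw [hG0, hH0]; simp
    · -- P > 0
      nlinarith
  have hfin : lam * L * (ξ * ∑ i ∈ A, |v i| - ∑ i ∈ Aᶜ, |v i|)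
      = ξ * (G + P) - (H + Q) := by rw [← hGP, ← hHQ]; ring
  rw [hfin]
  nlinarith
end

section
/- Let p ≥ 2 and n ≥ 1 be integers, R > 0, α₁ > 0, τ₁ ≥ 0, β* ∈ ℝ^p, and let L_n : ℝ^p → ℝ be differentiable (not necessarily convex). Suppose ⟨∇L_n(β* + Δ) − ∇L_n(β*), Δ⟩ ≥ α₁‖Δ‖₂² − τ₁((log p)/n)‖Δ‖₁² for all Δ ∈ ℝ^p with ‖Δ‖₁ ≤ 2R, and suppose n ≥ 4R²τ₁² log p. Then for all Δ ∈ ℝ^p with ‖Δ‖₂ ≥ 1 and ‖Δ‖₁ ≤ 2R, ⟨∇L_n(β* + Δ) − ∇L_n(β*), Δ⟩ ≥ α₁‖Δ‖₂ − √((log p)/n)·‖Δ‖₁. -/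
open Finset

theorem global_quadratic_rsc_implies_linear_rsc
    {p n : ℕ} (hp : 2 ≤ p) (hn : 1 ≤ n)
    (R a1 t1 : ℝ) (hR : 0 < R) (ha1 : 0 < a1) (ht1 : 0 ≤ t1)
    (bstar : Fin p → ℝ)
    (Ln : (Fin p → ℝ) → ℝ) (gradLn : (Fin p → ℝ) → (Fin p → ℝ))
    (hdiff : ∀ β : Fin p → ℝ, HasFDerivAt Ln
      (∑ i, gradLn β i • (ContinuousLinearMap.proj i : (Fin p → ℝ) →L[ℝ] ℝ)) β)
    (hglobal : ∀ Δ : Fin p → ℝ, l1 Δ ≤ 2 * R →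
      dot (gradLn (bstar + Δ) - gradLn bstar) Δ ≥
        a1 * (l2 Δ) ^ 2 - t1 * (Real.log p / n) * (l1 Δ) ^ 2)
    (hsample : 4 * R ^ 2 * t1 ^ 2 * Real.log p ≤ n) :
    ∀ Δ : Fin p → ℝ, 1 ≤ l2 Δ → l1 Δ ≤ 2 * R →
      dot (gradLn (bstar + Δ) - gradLn bstar) Δ ≥
        a1 * l2 Δ - Real.sqrt (Real.log p / n) * l1 Δ := by
  intro Δ h2 h1
  have hl1 : 0 ≤ l1 Δ := Finset.sum_nonneg fun i _ => abs_nonneg _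
  have hnpos : (0:ℝ) < n := by exact_mod_cast hn
  have hlogp : 0 ≤ Real.log p :=
    Real.log_nonneg (by exact_mod_cast le_trans one_le_two hp)
  set c : ℝ := Real.log p / n with hc
  have hc0 : 0 ≤ c := div_nonneg hlogp hnpos.le
  set s : ℝ := Real.sqrt c with hsdef
  have hs0 : 0 ≤ s := Real.sqrt_nonneg _
  have hs2 : s ^ 2 = c := Real.sq_sqrt hc0
  have hkey : t1 * s * l1 Δ ≤ 1 := by
    have h1' : t1 * s * l1 Δ ≤ t1 * s * (2 * R) := by
      have : 0 ≤ t1 * s := mul_nonneg ht1 hs0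
      nlinarith
    have hsq : (t1 * s * (2 * R)) ^ 2 ≤ 1 := by
      have heq : (t1 * s * (2 * R)) ^ 2 = 4 * R ^ 2 * t1 ^ 2 * Real.log p / n := by
        have h' : (t1 * s * (2 * R)) ^ 2 = 4 * R ^ 2 * t1 ^ 2 * s ^ 2 := by ring
        rw [h', hs2, hc]; ring
      rw [heq]
      exact div_le_one_of_le₀ hsample hnpos.le
    have h2R : 0 ≤ t1 * s * (2 * R) := by positivity
    nlinarith [h1', hsq]
  have hmain := hglobal Δ h1
  have hl2 : 0 < l2 Δ := lt_of_lt_of_le one_pos h2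
  have ht : t1 * c * l1 Δ ^ 2 ≤ s * l1 Δ := by
    have : t1 * c * l1 Δ ^ 2 = (t1 * s * l1 Δ) * (s * l1 Δ) := by
      rw [← hs2]; ring
    rw [this]
    have hsl : 0 ≤ s * l1 Δ := mul_nonneg hs0 hl1
    nlinarith [hkey, hsl]
  have ha : a1 * l2 Δ ≤ a1 * l2 Δ ^ 2 := by nlinarith [mul_nonneg (mul_nonneg ha1.le hl2.le) (sub_nonneg.mpr h2)]
  linarith
end
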